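/- Let τ be a finite unordered rooted tree and let θ be any self-nested tree obtained from τ by a sequence of allowed inserting operations AI and AS (which preserve the heights of all pre-existing vertices). Then, identifying the height profile of the self-nested tree θ with its integer values, for every 1 ≤ h ≤ H(τ), ρ_θ(h, h-1) ≥ max ρ_τ(h, h-1), the maximum being taken over the components of the vector ρ_τ(h, h-1). -/

import Mathlib

/-!
Allowed insertions keep the height of every old vertex, and they never detach a child `c` from
its parent `v` when `H(c) + 1 = H(v)`: AI only moves children with `H(c) + 1 < H(v)`. Hence a
vertex `v` of `t` with `H(v) = h` still has height `h` in `θ`, and at least `γ_{h-1}(v)` children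
of height `h - 1`. In the self-nested tree `θ` all vertices of height `h` root isomorphic
subtrees, so they share one value of `γ_{h-1}`, which thus bounds every component of
`ρ_t(h, h-1)`.

Heights are handled through the recursion `H(v) = max_c (H(c) + 1)` over the children `c` of
`v`, which determines them uniquely on any set of vertices closed under taking children; this is
how their invariance under insertions and under isomorphisms is proved.
-/

/-- A finite rooted tree whose vertices form a finite subset `supp` of `ℕ`.
`par` maps each vertex to its parent; the root is a fixed point of `par`
(so it has no parent), and every vertex reaches the root by iterating `par`
(connectedness / acyclicity). -/
structure FTree where
  supp : Finset ℕ
  root : ℕ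
  root_mem : root ∈ supp
  par : ℕ → ℕ
  par_mem : ∀ v ∈ supp, par v ∈ supp
  par_root : par root = root
  reach : ∀ v ∈ supp, ∃ n, par^[n] v = root

namespace FTree

/-- Depth of a vertex: least number of parent steps needed to reach the root. -/
noncomputable def depth (t : FTree) (v : ℕ) : ℕ :=
  if h : v ∈ t.supp then Nat.find (t.reach v h) else 0

/-- `w` is a (weak) descendant of `v` in `t`. -/
def IsDesc (t : FTree) (v w : ℕ) : Prop :=
  w ∈ t.supp ∧ ∃ n ≤ t.depth w, t.par^[n] w = v

open Classical in
/-- Vertex set of the subtree `t[v]` rooted at `v`. -/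
noncomputable def desc (t : FTree) (v : ℕ) : Finset ℕ :=
  t.supp.filter (fun w => t.IsDesc v w)

/-- Height of the subtree `t[v]` rooted at `v`. -/
noncomputable def heightAt (t : FTree) (v : ℕ) : ℕ :=
  (t.desc v).sup (fun w => t.depth w) - t.depth v

/-- Height of the tree. -/
noncomputable def height (t : FTree) : ℕ := t.heightAt t.root

/-- The set of children of `v` in `t`. -/
def children (t : FTree) (v : ℕ) : Finset ℕ :=
  t.supp.filter (fun w => t.par w = v ∧ w ≠ t.root)

open Classical in
/-- `γ_h(v)`: number of children of `v` whose subtree has height `h`. -/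
noncomputable def gam (t : FTree) (v h : ℕ) : ℕ :=
  ((t.children v).filter (fun c => t.heightAt c = h)).card

/-- The subtree of `t` rooted at `v` is isomorphic (as an unordered rooted tree)
to the subtree of `s` rooted at `w`: a bijection between the vertex sets sending
root to root and commuting with the parent maps (i.e. mapping edges to edges). -/
def SubtreeIso (t : FTree) (v : ℕ) (s : FTree) (w : ℕ) : Prop :=
  ∃ φ : ℕ → ℕ, Set.BijOn φ (t.desc v : Set ℕ) (s.desc w : Set ℕ) ∧ φ v = w ∧
    ∀ x ∈ t.desc v, x ≠ v → φ (t.par x) = s.par (φ x)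

/-- Isomorphism of rooted trees. -/
def TreeIso (t s : FTree) : Prop := SubtreeIso t t.root s s.root

/-- A tree is self-nested if any two of its subtrees of the same height
are isomorphic. -/
def SelfNested (t : FTree) : Prop :=
  ∀ v ∈ t.supp, ∀ w ∈ t.supp, t.heightAt v = t.heightAt w → SubtreeIso t v t w

open Classical in
/-- Height profile entry `ρ_t(h1,h2)`: the multiset (family up to permutation) of
the values `γ_{h2}(v)` over all vertices `v` of `t` with `H(t[v]) = h1`. -/
noncomputable def profile (t : FTree) (h1 h2 : ℕ) : Multiset ℕ :=
  (t.supp.filter (fun v => t.heightAt v = h1)).val.map (fun v => t.gam v h2)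

/-- Number of vertices of `t`. -/
def numV (t : FTree) : ℕ := t.supp.card

/-- `a` is a (weak) ancestor of `b`. -/
def IsAnc (t : FTree) (a b : ℕ) : Prop := ∃ n, t.par^[n] b = a

/-- `a` is a proper ancestor of `b`. -/
def ProperAnc (t : FTree) (a b : ℕ) : Prop := a ≠ b ∧ t.IsAnc a b

/-- `l` is the least common ancestor of `a` and `b`. -/
def IsLCA (t : FTree) (a b l : ℕ) : Prop :=
  l ∈ t.supp ∧ t.IsAnc l a ∧ t.IsAnc l b ∧
    ∀ m ∈ t.supp, t.IsAnc m a → t.IsAnc m b → t.IsAnc m l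

/-- `φ`, restricted to the domain `D ⊆ t.supp`, is a constrained mapping in the
sense of Zhang from `t` to `s`: a one-to-one correspondence preserving the
ancestor order, satisfying moreover Zhang's condition on least common ancestors. -/
def ZhangMapping (t s : FTree) (D : Finset ℕ) (φ : ℕ → ℕ) : Prop :=
  D ⊆ t.supp ∧ (∀ x ∈ D, φ x ∈ s.supp) ∧ Set.InjOn φ (D : Set ℕ) ∧
  (∀ a ∈ D, ∀ b ∈ D, (t.ProperAnc a b ↔ s.ProperAnc (φ a) (φ b))) ∧
  (∀ v1 ∈ D, ∀ v2 ∈ D, ∀ v3 ∈ D, ∀ l l',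
    t.IsLCA v1 v2 l → s.IsLCA (φ v1) (φ v2) l' →
    (t.ProperAnc l v3 ↔ s.ProperAnc l' (φ v3)))

/-- Allowed inserting operation (AI): adding a new internal vertex `w` as a child of
`v`, making `w` the parent of the child `c` of `v`; allowed only if
`H(t[c]) + 1 < H(t[v])`. -/
def InsertAI (t θ : FTree) : Prop :=
  ∃ v c w, v ∈ t.supp ∧ c ∈ t.children v ∧ w ∉ t.supp ∧
    t.heightAt c + 1 < t.heightAt v ∧
    θ.supp = insert w t.supp ∧ θ.root = t.root ∧
    θ.par w = v ∧ θ.par c = w ∧ ∀ x ∈ t.supp, x ≠ c → θ.par x = t.par x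

/-- Allowed inserting operation (AS): attaching a tree `s` as a new child subtree of
`v`; allowed only if `H(s) + 1 ≤ H(t[v])`. -/
def InsertAS (t θ : FTree) : Prop :=
  ∃ (v : ℕ) (s : FTree), v ∈ t.supp ∧ Disjoint s.supp t.supp ∧
    s.height + 1 ≤ t.heightAt v ∧
    θ.supp = t.supp ∪ s.supp ∧ θ.root = t.root ∧ θ.par s.root = v ∧
    (∀ x ∈ t.supp, θ.par x = t.par x) ∧ (∀ x ∈ s.supp, x ≠ s.root → θ.par x = s.par x)

/-- One allowed inserting operation. -/
def InsertStep (t θ : FTree) : Prop := InsertAI t θ ∨ InsertAS t θ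

/-- Allowed deleting operation (DI): deleting an internal vertex `v`, child of `u`,
having a unique child `c` (which becomes a child of `u`); allowed only if `u` has
another child `v'` with `H(t[v']) ≥ H(t[v])`. -/
def DeleteDI (t θ : FTree) : Prop :=
  ∃ u v c, v ∈ t.children u ∧ t.children v = {c} ∧
    (∃ v' ∈ t.children u, v' ≠ v ∧ t.heightAt v ≤ t.heightAt v') ∧
    θ.supp = t.supp.erase v ∧ θ.root = t.root ∧ θ.par c = u ∧
    ∀ x ∈ t.supp, x ≠ v → x ≠ c → θ.par x = t.par x

/-- Allowed deleting operation (DS): deleting the whole subtree rooted at a child `w`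
of `v`; allowed only if `v` has another child `w'` with `H(t[w']) + 1 = H(t[v])`. -/
def DeleteDS (t θ : FTree) : Prop :=
  ∃ v w, w ∈ t.children v ∧
    (∃ w' ∈ t.children v, w' ≠ w ∧ t.heightAt w' + 1 = t.heightAt v) ∧
    θ.supp = t.supp \ t.desc w ∧ θ.root = t.root ∧
    ∀ x ∈ θ.supp, θ.par x = t.par x

/-- One allowed deleting operation. -/
def DeleteStep (t θ : FTree) : Prop := DeleteDI t θ ∨ DeleteDS t θ

/-- A general single-vertex inserting operation: a new vertex `w` is added as a child
of `v`, and the vertices of a subset `C` of the children of `v` become children of `w`. -/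
def GeneralInsert (t θ : FTree) : Prop :=
  ∃ (v w : ℕ) (C : Finset ℕ), v ∈ t.supp ∧ w ∉ t.supp ∧ C ⊆ t.children v ∧
    θ.supp = insert w t.supp ∧ θ.root = t.root ∧ θ.par w = v ∧
    (∀ x ∈ C, θ.par x = w) ∧ ∀ x ∈ t.supp, x ∉ C → θ.par x = t.par x

/-- Cost of a constrained mapping with domain `D`: vertices of `t` not in the domain
are deleted, vertices of `s` not in the image are inserted (unit costs). -/
def mappingCost (t s : FTree) (D : Finset ℕ) (φ : ℕ → ℕ) : ℕ :=
  (t.numV - D.card) + (s.numV - (D.image φ).card)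

/-- Zhang's constrained edit distance between unordered trees: the minimal cost
associated with a constrained mapping between `t` and `s`. -/
noncomputable def DZ (t s : FTree) : ℕ :=
  sInf { c | ∃ (D : Finset ℕ) (φ : ℕ → ℕ), ZhangMapping t s D φ ∧ c = mappingCost t s D φ }

end FTree

namespace FTree

section Descendants

variable (t : FTree)

theorem iterate_par_mem {v : ℕ} (hv : v ∈ t.supp) (n : ℕ) : t.par^[n] v ∈ t.supp := by
  induction n with
  | zero => exact hv
  | succ n ih => rw [Function.iterate_succ_apply']; exact t.par_mem _ ih

theorem iterate_par_root (n : ℕ) : t.par^[n] t.root = t.root :=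
  Function.iterate_fixed t.par_root n

theorem iterate_par_ne_root_of_lt_depth {v n : ℕ} (hv : v ∈ t.supp) (hn : n < t.depth v) :
    t.par^[n] v ≠ t.root := by
  rw [depth, dif_pos hv] at hn
  exact Nat.find_min (t.reach v hv) hn

theorem depth_root : t.depth t.root = 0 := by
  rw [depth, dif_pos t.root_mem]
  exact (Nat.find_eq_zero _).2 rfl

theorem depth_eq_depth_par_add_one {v : ℕ} (hv : v ∈ t.supp) (hr : v ≠ t.root) :
    t.depth v = t.depth (t.par v) + 1 := by
  rw [depth, dif_pos hv, depth, dif_pos (t.par_mem v hv)]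
  exact Nat.find_comp_succ _ _ hr

theorem depth_iterate_par_add {v n : ℕ} (hv : v ∈ t.supp) (hn : n ≤ t.depth v) :
    t.depth (t.par^[n] v) + n = t.depth v := by
  induction n with
  | zero => rfl
  | succ n ih =>
    rw [Function.iterate_succ_apply', ← ih (by omega), t.depth_eq_depth_par_add_one
      (t.iterate_par_mem hv n) (t.iterate_par_ne_root_of_lt_depth hv (by omega))]
    omega

theorem mem_desc {v x : ℕ} :
    x ∈ t.desc v ↔ x ∈ t.supp ∧ t.depth v ≤ t.depth x ∧ t.par^[t.depth x - t.depth v] x = v := by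
  classical
  rw [desc, Finset.mem_filter, IsDesc, and_self_left]
  refine and_congr_right fun hx => ⟨fun ⟨n, hn, hnv⟩ => ?_, fun ⟨_, h⟩ => ⟨_, by omega, h⟩⟩
  have := t.depth_iterate_par_add hx hn
  rw [hnv] at this
  exact ⟨by omega, by rwa [show t.depth x - t.depth v = n by omega]⟩

theorem mem_desc_self {v : ℕ} (hv : v ∈ t.supp) : v ∈ t.desc v :=
  t.mem_desc.2 ⟨hv, le_rfl, by simp⟩

theorem mem_desc_trans {x y v : ℕ} (hxy : x ∈ t.desc y) (hyv : y ∈ t.desc v) :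
    x ∈ t.desc v := by
  obtain ⟨hx, hle₁, hpar₁⟩ := t.mem_desc.1 hxy
  obtain ⟨-, hle₂, hpar₂⟩ := t.mem_desc.1 hyv
  refine t.mem_desc.2 ⟨hx, by omega, ?_⟩
  rw [show t.depth x - t.depth v = (t.depth y - t.depth v) + (t.depth x - t.depth y) by omega,
    Function.iterate_add_apply, hpar₁, hpar₂]

theorem ne_root_of_mem_desc {x v : ℕ} (hx : x ∈ t.desc v) (hxv : x ≠ v) : x ≠ t.root := by
  rintro rfl
  obtain ⟨-, -, hpar⟩ := t.mem_desc.1 hx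
  exact hxv (t.iterate_par_root _ ▸ hpar)

theorem par_mem_desc {x v : ℕ} (hx : x ∈ t.desc v) (hxv : x ≠ v) : t.par x ∈ t.desc v := by
  obtain ⟨hxs, hle, hpar⟩ := t.mem_desc.1 hx
  have hdepth := t.depth_eq_depth_par_add_one hxs (t.ne_root_of_mem_desc hx hxv)
  have hlt : t.depth v < t.depth x := by
    refine lt_of_le_of_ne hle fun h => hxv ?_
    simpa [h] using hpar
  refine t.mem_desc.2 ⟨t.par_mem x hxs, by omega, ?_⟩
  rwa [← Function.iterate_succ_apply, show (t.depth (t.par x) - t.depth v).succ =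
    t.depth x - t.depth v by omega]

theorem mem_desc_of_par_mem_desc {x v : ℕ} (hx : x ∈ t.supp) (hr : x ≠ t.root)
    (hpar : t.par x ∈ t.desc v) : x ∈ t.desc v := by
  obtain ⟨-, hle, hparv⟩ := t.mem_desc.1 hpar
  have hdepth := t.depth_eq_depth_par_add_one hx hr
  refine t.mem_desc.2 ⟨hx, by omega, ?_⟩
  rwa [show t.depth x - t.depth v = (t.depth (t.par x) - t.depth v).succ by omega,
    Function.iterate_succ_apply]

theorem mem_children {x v : ℕ} :
    x ∈ t.children v ↔ x ∈ t.supp ∧ t.par x = v ∧ x ≠ t.root := by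
  simp [children]

theorem children_subset_supp (v : ℕ) : t.children v ⊆ t.supp :=
  Finset.filter_subset _ _

theorem mem_supp_of_mem_children {c v : ℕ} (hc : c ∈ t.children v) : v ∈ t.supp := by
  obtain ⟨hcs, rfl, -⟩ := t.mem_children.1 hc
  exact t.par_mem c hcs

theorem mem_desc_of_mem_children {c v : ℕ} (hc : c ∈ t.children v) : c ∈ t.desc v := by
  obtain ⟨hcs, rfl, hr⟩ := t.mem_children.1 hc
  exact t.mem_desc_of_par_mem_desc hcs hr (t.mem_desc_self (t.par_mem c hcs))

theorem depth_of_mem_children {c v : ℕ} (hc : c ∈ t.children v) :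
    t.depth c = t.depth v + 1 := by
  obtain ⟨hcs, rfl, hr⟩ := t.mem_children.1 hc
  exact t.depth_eq_depth_par_add_one hcs hr

theorem exists_mem_children_of_mem_desc {x v : ℕ} (hx : x ∈ t.desc v) (hxv : x ≠ v) :
    ∃ c ∈ t.children v, x ∈ t.desc c := by
  obtain ⟨hxs, hle, hpar⟩ := t.mem_desc.1 hx
  have hlt : t.depth v < t.depth x := by
    refine lt_of_le_of_ne hle fun h => hxv ?_
    simpa [h] using hpar
  set k := t.depth x - t.depth v - 1
  have hck : t.depth (t.par^[k] x) + k = t.depth x := t.depth_iterate_par_add hxs (by omega)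
  have hcpar : t.par (t.par^[k] x) = v := by
    rwa [← Function.iterate_succ_apply' t.par, show k.succ = t.depth x - t.depth v by omega]
  refine ⟨t.par^[k] x, t.mem_children.2 ⟨t.iterate_par_mem hxs k, hcpar, fun hr => ?_⟩,
    t.mem_desc.2 ⟨hxs, by omega, by rw [show t.depth x - t.depth (t.par^[k] x) = k by omega]⟩⟩
  rw [hr, t.par_root] at hcpar
  subst hcpar
  rw [hr, t.depth_root] at hck
  omega

theorem mem_supp_of_mem_desc {x v : ℕ} (hx : x ∈ t.desc v) : v ∈ t.supp := by
  obtain ⟨hxs, -, hpar⟩ := t.mem_desc.1 hx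
  exact hpar ▸ t.iterate_par_mem hxs _

end Descendants

section Height

variable (t : FTree)

theorem depth_add_heightAt {v : ℕ} (hv : v ∈ t.supp) :
    t.depth v + t.heightAt v = (t.desc v).sup t.depth := by
  rw [heightAt]
  exact Nat.add_sub_cancel' (Finset.le_sup (f := t.depth) (t.mem_desc_self hv))

theorem heightAt_eq_sup_children {v : ℕ} (hv : v ∈ t.supp) :
    t.heightAt v = (t.children v).sup fun c => t.heightAt c + 1 := by
  have hv' := t.depth_add_heightAt hv
  apply le_antisymm
  · obtain ⟨z, hz, hzmax⟩ := Finset.exists_mem_eq_sup _ ⟨v, t.mem_desc_self hv⟩ t.depth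
    by_cases hzv : z = v
    · subst hzv
      omega
    obtain ⟨c, hc, hzc⟩ := t.exists_mem_children_of_mem_desc hz hzv
    have hz_le := Finset.le_sup (f := t.depth) hzc
    have hc' := t.depth_add_heightAt (t.mem_children.1 hc).1
    have hc_le := Finset.le_sup (f := fun c => t.heightAt c + 1) hc
    have := t.depth_of_mem_children hc
    omega
  · refine Finset.sup_le fun c hc => ?_
    have hsup : (t.desc c).sup t.depth ≤ (t.desc v).sup t.depth :=
      Finset.sup_mono fun x hx => t.mem_desc_trans hx (t.mem_desc_of_mem_children hc)
    have hc' := t.depth_add_heightAt (t.mem_children.1 hc).1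
    have := t.depth_of_mem_children hc
    omega

theorem heightAt_lt_of_mem_children {c v : ℕ} (hc : c ∈ t.children v) :
    t.heightAt c < t.heightAt v := by
  rw [t.heightAt_eq_sup_children (t.mem_supp_of_mem_children hc)]
  exact Finset.le_sup (f := fun c => t.heightAt c + 1) hc

theorem heightAt_eq_sup_erase {c v : ℕ} (hc : c ∈ t.children v)
    (hcv : t.heightAt c + 1 < t.heightAt v) :
    t.heightAt v = ((t.children v).erase c).sup fun c => t.heightAt c + 1 := by
  have h := t.heightAt_eq_sup_children (t.mem_supp_of_mem_children hc)
  rw [← Finset.insert_erase hc, Finset.sup_insert] at h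
  omega

theorem eq_heightAt_of_eq_sup_children {S : Set ℕ} (hS : S ⊆ t.supp)
    (hclosed : ∀ x ∈ S, ↑(t.children x) ⊆ S) {g : ℕ → ℕ}
    (hg : ∀ x ∈ S, g x = (t.children x).sup fun c => g c + 1) {x : ℕ} (hx : x ∈ S) :
    g x = t.heightAt x := by
  induction hH : t.heightAt x using Nat.strong_induction_on generalizing x with
  | _ n ih =>
    rw [hg x hx, ← hH, t.heightAt_eq_sup_children (hS hx)]
    refine Finset.sup_congr rfl fun c hc => ?_
    rw [ih _ (hH ▸ t.heightAt_lt_of_mem_children hc) (hclosed x hx hc) rfl]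

end Height

def IsSubtreeIsoMap (t : FTree) (v : ℕ) (s : FTree) (w : ℕ) (φ : ℕ → ℕ) : Prop :=
  Set.BijOn φ (t.desc v : Set ℕ) (s.desc w : Set ℕ) ∧ φ v = w ∧
    ∀ x ∈ t.desc v, x ≠ v → φ (t.par x) = s.par (φ x)

namespace IsSubtreeIsoMap

variable {t s : FTree} {v w : ℕ} {φ : ℕ → ℕ}

theorem children_map (hφ : IsSubtreeIsoMap t v s w φ) {x : ℕ} (hx : x ∈ t.desc v) :
    s.children (φ x) = (t.children x).image φ := by
  obtain ⟨hbij, hroot, hpar⟩ := hφ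
  have hφx : φ x ∈ s.desc w := hbij.mapsTo hx
  have hxv := (t.mem_desc.1 hx).2.1
  have hφxw := (s.mem_desc.1 hφx).2.1
  ext z
  rw [Finset.mem_image]
  constructor
  · intro hz
    obtain ⟨y, hy, rfl⟩ := hbij.surjOn (s.mem_desc_trans (s.mem_desc_of_mem_children hz) hφx)
    have hyv : y ≠ v := by
      rintro rfl
      have := s.depth_of_mem_children hz
      rw [hroot] at this
      omega
    have hpy : t.par y = x :=
      hbij.injOn (t.par_mem_desc hy hyv) hx (by rw [hpar y hy hyv, (s.mem_children.1 hz).2.1])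
    exact ⟨y, t.mem_children.2 ⟨(t.mem_desc.1 hy).1, hpy, t.ne_root_of_mem_desc hy hyv⟩, rfl⟩
  · rintro ⟨y, hy, rfl⟩
    have hyd : y ∈ t.desc v := t.mem_desc_trans (t.mem_desc_of_mem_children hy) hx
    have hyv : y ≠ v := by
      rintro rfl
      have := t.depth_of_mem_children hy
      omega
    have hφy : φ y ∈ s.desc w := hbij.mapsTo hyd
    have hφyw : φ y ≠ w := fun h => hyv (hbij.injOn hyd (t.mem_desc_self
      (t.mem_supp_of_mem_desc hx)) (h.trans hroot.symm))
    exact s.mem_children.2 ⟨(s.mem_desc.1 hφy).1,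
      by rw [← hpar y hyd hyv, (t.mem_children.1 hy).2.1], s.ne_root_of_mem_desc hφy hφyw⟩

theorem heightAt_map (hφ : IsSubtreeIsoMap t v s w φ) {x : ℕ} (hx : x ∈ t.desc v) :
    s.heightAt (φ x) = t.heightAt x := by
  refine t.eq_heightAt_of_eq_sup_children (S := t.desc v) (g := fun y => s.heightAt (φ y)) (fun y hy => (t.mem_desc.1 hy).1)
    (fun y hy c hc => t.mem_desc_trans (t.mem_desc_of_mem_children hc) hy) (fun y hy => ?_) hx
  rw [s.heightAt_eq_sup_children (s.mem_desc.1 (hφ.1.mapsTo hy)).1, hφ.children_map hy,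
    Finset.sup_image]
  rfl

theorem gam_map (hφ : IsSubtreeIsoMap t v s w φ) (hv : v ∈ t.supp) (k : ℕ) :
    s.gam w k = t.gam v k := by
  have hv' := t.mem_desc_self hv
  classical
  rw [gam, gam, ← hφ.2.1, hφ.children_map hv', Finset.filter_image,
    Finset.card_image_of_injOn (hφ.1.injOn.mono fun y hy => ?_)]
  · exact congrArg _ (Finset.filter_congr fun c hc => by
      rw [hφ.heightAt_map (t.mem_desc_trans (t.mem_desc_of_mem_children hc) hv')])
  · exact t.mem_desc_trans (t.mem_desc_of_mem_children (Finset.mem_filter.1 hy).1) hv'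

end IsSubtreeIsoMap

theorem SubtreeIso.gam_eq {t s : FTree} {v w : ℕ} (h : t.SubtreeIso v s w) (hv : v ∈ t.supp)
    (k : ℕ) : t.gam v k = s.gam w k :=
  let ⟨_, hφ⟩ := h
  (IsSubtreeIsoMap.gam_map hφ hv k).symm

/-- The edges kept by `par_eq` are exactly those counted by `gam u (heightAt u - 1)`. -/
structure IsHeightExtension (t θ : FTree) : Prop where
  supp_subset : t.supp ⊆ θ.supp
  heightAt_eq : ∀ u ∈ t.supp, θ.heightAt u = t.heightAt u
  par_eq : ∀ x ∈ t.supp, t.heightAt (t.par x) = t.heightAt x + 1 → θ.par x = t.par x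

namespace IsHeightExtension

variable {t θ θ' : FTree}

theorem refl (t : FTree) : IsHeightExtension t t :=
  ⟨subset_rfl, fun _ _ => rfl, fun _ _ _ => rfl⟩

theorem trans (h : IsHeightExtension t θ) (h' : IsHeightExtension θ θ') :
    IsHeightExtension t θ' where
  supp_subset := h.supp_subset.trans h'.supp_subset
  heightAt_eq u hu := (h'.heightAt_eq u (h.supp_subset hu)).trans (h.heightAt_eq u hu)
  par_eq x hx htight := by
    have hpar := h.par_eq x hx htight
    rw [h'.par_eq x (h.supp_subset hx) (by rw [hpar, h.heightAt_eq _ (t.par_mem x hx),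
      h.heightAt_eq x hx, htight]), hpar]

theorem gam_le (h : IsHeightExtension t θ) {u k : ℕ} (hu : u ∈ t.supp)
    (hk : t.heightAt u = k + 1) : t.gam u k ≤ θ.gam u k := by
  refine Finset.card_le_card fun x hx => ?_
  obtain ⟨hxc, hxk⟩ := Finset.mem_filter.1 hx
  obtain ⟨hxs, hxu, -⟩ := t.mem_children.1 hxc
  have hpar : θ.par x = u := (h.par_eq x hxs (by rw [hxu, hk, hxk])).trans hxu
  have hxu' : x ≠ u := by
    rintro rfl
    omega
  refine Finset.mem_filter.2 ⟨θ.mem_children.2 ⟨h.supp_subset hxs, hpar, fun hr => hxu' ?_⟩, ?_⟩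
  · rw [← hpar, hr, θ.par_root]
  · rw [h.heightAt_eq x hxs, hxk]

theorem of_eq_sup_children (hsupp : t.supp ⊆ θ.supp) {g : ℕ → ℕ}
    (hg : ∀ x ∈ θ.supp, g x = (θ.children x).sup fun c => g c + 1)
    (hgt : ∀ u ∈ t.supp, g u = t.heightAt u)
    (hpar : ∀ x ∈ t.supp, t.heightAt (t.par x) = t.heightAt x + 1 → θ.par x = t.par x) :
    IsHeightExtension t θ where
  supp_subset := hsupp
  heightAt_eq u hu := by
    rw [← θ.eq_heightAt_of_eq_sup_children (S := θ.supp) subset_rfl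
      (fun x _ => θ.children_subset_supp x) hg (hsupp hu), hgt u hu]
  par_eq := hpar

end IsHeightExtension

theorem InsertAI.isHeightExtension {t θ : FTree} (h : InsertAI t θ) : IsHeightExtension t θ := by
  classical
  obtain ⟨v, c, w, hv, hc, hw, hcv, hsupp, hroot, hpw, hpc, hpar⟩ := h
  obtain ⟨hcs, hcpar, hcr⟩ := t.mem_children.1 hc
  have hθsupp : ∀ x, x ∈ θ.supp ↔ x = w ∨ x ∈ t.supp := by simp [hsupp]
  have hwr : w ≠ t.root := fun h => hw (h ▸ t.root_mem)
  have hchildren_w : θ.children w = {c} := by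
    ext y
    simp only [mem_children, hθsupp, hroot, Finset.mem_singleton]
    have := t.par_mem y
    grind
  have hchildren_v : θ.children v = insert w ((t.children v).erase c) := by
    ext y
    simp only [mem_children, hθsupp, hroot, Finset.mem_insert, Finset.mem_erase]
    grind
  have hchildren : ∀ x ∈ t.supp, x ≠ v → θ.children x = t.children x := by
    intro x hx hxv
    ext y
    simp only [mem_children, hθsupp, hroot]
    grind
  set g : ℕ → ℕ := fun x => if x = w then t.heightAt c + 1 else t.heightAt x
  have hgw : g w = t.heightAt c + 1 := if_pos rfl
  have hgt : ∀ u ∈ t.supp, g u = t.heightAt u :=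
    fun u hu => if_neg fun h : u = w => hw (h ▸ hu)
  have hsup : ∀ A ⊆ t.supp, (A.sup fun c => g c + 1) = A.sup fun c => t.heightAt c + 1 :=
    fun A hA => Finset.sup_congr rfl fun c hc => by rw [hgt c (hA hc)]
  refine IsHeightExtension.of_eq_sup_children (g := g) (by simp [hsupp]) (fun x hx => ?_) hgt
    fun x hx htight => hpar x hx fun hxc => by
      subst hxc
      rw [hcpar] at htight
      omega
  rcases (hθsupp x).1 hx with rfl | hx
  · rw [hchildren_w, Finset.sup_singleton, hgt c hcs, hgw]
  by_cases hxv : x = v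
  · subst hxv
    rw [hchildren_v, Finset.sup_insert, hsup _ ((Finset.erase_subset _ _).trans
      (t.children_subset_supp x)), hgt x hx, hgw, ← t.heightAt_eq_sup_erase hc hcv]
    omega
  · rw [hchildren x hx hxv, hsup _ (t.children_subset_supp x), hgt x hx,
      t.heightAt_eq_sup_children hx]

theorem InsertAS.isHeightExtension {t θ : FTree} (h : InsertAS t θ) : IsHeightExtension t θ := by
  classical
  obtain ⟨v, s, hv, hdisj, hs, hsupp, hroot, hpv, hpart, hpars⟩ := h
  have hθsupp : ∀ x, x ∈ θ.supp ↔ x ∈ t.supp ∨ x ∈ s.supp := by simp [hsupp]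
  have hst : ∀ x ∈ s.supp, x ∉ t.supp := fun x hx => Finset.disjoint_left.1 hdisj hx
  have hsr := s.root_mem
  have htr := t.root_mem
  have hchildren_s : ∀ x ∈ s.supp, θ.children x = s.children x := by
    intro x hx
    ext y
    simp only [mem_children, hθsupp, hroot]
    have := t.par_mem y
    have := s.par_mem y
    grind
  have hchildren_v : θ.children v = insert s.root (t.children v) := by
    ext y
    simp only [mem_children, hθsupp, hroot, Finset.mem_insert]
    have := s.par_mem y
    grind
  have hchildren : ∀ x ∈ t.supp, x ≠ v → θ.children x = t.children x := by
    intro x hx hxv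
    ext y
    simp only [mem_children, hθsupp, hroot]
    have := s.par_mem y
    grind
  set g : ℕ → ℕ := fun x => if x ∈ t.supp then t.heightAt x else s.heightAt x
  have hgt : ∀ u ∈ t.supp, g u = t.heightAt u := fun u hu => if_pos hu
  have hgs : ∀ u ∈ s.supp, g u = s.heightAt u := fun u hu => if_neg (hst u hu)
  have hsup : ∀ x, ((t.children x).sup fun c => g c + 1) =
      (t.children x).sup fun c => t.heightAt c + 1 :=
    fun x => Finset.sup_congr rfl fun c hc => by rw [hgt c (t.children_subset_supp x hc)]
  refine IsHeightExtension.of_eq_sup_children (g := g) (by simp [hsupp]) (fun x hx => ?_) hgt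
    fun x hx _ => hpart x hx
  rcases (hθsupp x).1 hx with hx | hx
  · by_cases hxv : x = v
    · subst hxv
      have hsroot : s.heightAt s.root = s.height := rfl
      rw [hchildren_v, Finset.sup_insert, hgs _ hsr, hsup, hgt x hx,
        ← t.heightAt_eq_sup_children hx]
      omega
    · rw [hchildren x hx hxv, hgt x hx, hsup, t.heightAt_eq_sup_children hx]
  · rw [hchildren_s x hx, hgs x hx, s.heightAt_eq_sup_children hx]
    exact Finset.sup_congr rfl fun c hc => by rw [hgs c (s.children_subset_supp x hc)]

theorem IsHeightExtension.of_reflTransGen {t θ : FTree}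
    (h : Relation.ReflTransGen InsertStep t θ) : IsHeightExtension t θ := by
  induction h with
  | refl => exact .refl t
  | tail _ hstep ih =>
    exact ih.trans (hstep.elim InsertAI.isHeightExtension InsertAS.isHeightExtension)

theorem mem_profile {t : FTree} {h₁ h₂ n : ℕ} :
    n ∈ t.profile h₁ h₂ ↔ ∃ v ∈ t.supp, t.heightAt v = h₁ ∧ t.gam v h₂ = n := by
  classical
  simp [profile, and_assoc]

end FTree

/-- Let `θ` be a self-nested tree obtained from `t` by a sequence of
allowed inserting operations AI and AS. Then, for every `1 ≤ h ≤ H(t)`, the (common)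
value of the entry `ρ_θ(h, h-1)` of the height profile of `θ` is at least the maximum of
the components of the vector `ρ_t(h, h-1)`: every component of `ρ_θ(h,h-1)` is at least
every component of `ρ_t(h,h-1)`. -/
theorem nest_profile_lower_bound (t θ : FTree)
    (hreach : Relation.ReflTransGen FTree.InsertStep t θ)
    (hsn : θ.SelfNested) :
    ∀ h, 1 ≤ h → h ≤ t.height →
      ∀ x ∈ θ.profile h (h - 1), ∀ y ∈ t.profile h (h - 1), y ≤ x := by
  intro h h1 _ x hx y hy
  have hext := FTree.IsHeightExtension.of_reflTransGen hreach
  obtain ⟨v, hv, hvh, rfl⟩ := FTree.mem_profile.1 hy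
  obtain ⟨w, hw, hwh, rfl⟩ := FTree.mem_profile.1 hx
  have hvθ := hext.supp_subset hv
  have hθv : θ.heightAt v = h := (hext.heightAt_eq v hv).trans hvh
  calc t.gam v (h - 1) ≤ θ.gam v (h - 1) := hext.gam_le hv (by omega)
    _ = θ.gam w (h - 1) := (hsn v hvθ w hw (hθv.trans hwh.symm)).gam_eq hvθ _
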